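/- arXiv:1201.6422 — 3 statements merged into one kernel-verified Lean document; each statement's English description precedes it below -/
import Mathlib

section
/- Let A be a finite-dimensional algebra and M a finite-dimensional A-module that is Schur (End_A(M) ≅ K) and homogeneous (M ≅ τM, where τ is the Auslander–Reiten translate). Define the weight θ^M on dimension vectors by θ^M(dim X) = dim_K Hom_A(M, X) − dim_K Hom_A(X, τM). Then M is θ^M-stable: θ^M(dim M) = 0 and θ^M(dim M') < 0 for every proper nonzero submodule M' ⊊ M. -/
/-!
Since `End_A(M) = K`, an `A`-linear map from `M` into a proper submodule `M'`, composed with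
the inclusion, is a scalar; a nonzero scalar is surjective onto `M`, so the map vanishes and
`Hom_A(M, M') = 0`. On the other hand `Hom_A(M', τM) ≅ Hom_A(M', M)` contains the inclusion,
so `θ^M(dim M') < 0`, while `θ^M(dim M) = dim End_A(M) − dim Hom_A(M, τM) = 0` as `M ≅ τM`.
-/

open Module

section HomSpaces

variable {K A X M N : Type*} [Field K] [Ring A] [Algebra K A]
  [AddCommGroup X] [Module A X]
  [AddCommGroup M] [Module K M] [Module A M] [IsScalarTower K A M] [SMulCommClass A K M]
  [AddCommGroup N] [Module K N] [Module A N] [IsScalarTower K A N] [SMulCommClass A K N]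

instance FiniteDimensional.linearMap_of_isScalarTower [Module K X] [IsScalarTower K A X]
    [FiniteDimensional K X] [FiniteDimensional K N] : FiniteDimensional K (X →ₗ[A] N) :=
  .of_injective (LinearMap.restrictScalarsₗ K A X N K) (LinearMap.restrictScalars_injective K)

variable (K) in
theorem finrank_linearMap_congr_right (e : M ≃ₗ[A] N) :
    finrank K (X →ₗ[A] M) = finrank K (X →ₗ[A] N) :=
  (LinearEquiv.ofLinearMap (LinearMap.compRight K e.toLinearMap)
    (LinearMap.compRight K e.symm.toLinearMap) (by ext; simp) (by ext; simp)).finrank_eq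

theorem Submodule.finrank_linearMap_pos [FiniteDimensional K M] {P : Submodule A M}
    (hP : P ≠ ⊥) : 0 < finrank K (P →ₗ[A] M) := by
  have : FiniteDimensional K P :=
    .of_injective (P.subtype.restrictScalars K) P.subtype_injective
  have : Nontrivial (P →ₗ[A] M) :=
    ⟨P.subtype, 0, fun h => hP <| by simpa using congrArg LinearMap.range h⟩
  exact finrank_pos

end HomSpaces

section Schur

variable {K A M : Type*} [Field K] [Ring A] [Algebra K A]
  [AddCommGroup M] [Module K M] [Module A M] [IsScalarTower K A M] [SMulCommClass A K M]
  (hSchur : Function.Surjective (algebraMap K (Module.End A M)))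
include hSchur

theorem Module.End.eq_zero_of_range_ne_top {f : Module.End A M} (hf : LinearMap.range f ≠ ⊤) :
    f = 0 := by
  obtain ⟨c, rfl⟩ := hSchur f
  rcases eq_or_ne c 0 with rfl | hc
  · exact map_zero _
  · have hbij := (Module.End.isUnit_iff _).mp (hc.isUnit.map (algebraMap K (Module.End A M)))
    exact absurd (LinearMap.range_eq_top_of_surjective _ hbij.2) hf

theorem Submodule.linearMap_eq_zero_of_ne_top {P : Submodule A M} (hP : P ≠ ⊤)
    (g : M →ₗ[A] P) : g = 0 := by
  have hrange : LinearMap.range (P.subtype ∘ₗ g) ≠ ⊤ := fun h =>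
    hP (top_unique (h ▸ LinearMap.range_comp_le_range g P.subtype |>.trans P.range_subtype.le))
  have hcomp := Module.End.eq_zero_of_range_ne_top hSchur hrange
  ext x
  simpa using LinearMap.congr_fun hcomp x

theorem Submodule.finrank_linearMap_eq_zero_of_ne_top {P : Submodule A M} (hP : P ≠ ⊤) :
    finrank K (M →ₗ[A] P) = 0 :=
  have : Subsingleton (M →ₗ[A] P) :=
    subsingleton_of_forall_eq 0 (linearMap_eq_zero_of_ne_top hSchur hP)
  finrank_zero_of_subsingleton

end Schur

theorem stmt4_general (K A M T : Type*) [Field K] [Ring A] [Algebra K A]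
    [AddCommGroup M] [Module K M] [Module A M] [IsScalarTower K A M]
    [SMulCommClass A K M] [FiniteDimensional K M]
    [AddCommGroup T] [Module K T] [Module A T] [IsScalarTower K A T]
    [SMulCommClass A K T]
    (hSchur : Function.Bijective (algebraMap K (Module.End A M)))
    (hhomogeneous : Nonempty (M ≃ₗ[A] T)) :
    ((Module.finrank K (M →ₗ[A] M) : ℤ) - Module.finrank K (M →ₗ[A] T) = 0) ∧
    (∀ M' : Submodule A M, M' ≠ ⊥ → M' ≠ ⊤ →
      (Module.finrank K (M →ₗ[A] M') : ℤ) - Module.finrank K (M' →ₗ[A] T) < 0) := by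
  obtain ⟨e⟩ := hhomogeneous
  refine ⟨by rw [finrank_linearMap_congr_right K e, sub_self], fun M' hbot htop => ?_⟩
  rw [M'.finrank_linearMap_eq_zero_of_ne_top hSchur.2 htop,
    ← finrank_linearMap_congr_right K e]
  have hpos : 0 < finrank K (M' →ₗ[A] M) := M'.finrank_linearMap_pos hbot
  omega

/-- Let `A` be a finite-dimensional algebra over an algebraically
closed field `K`, and `M` a finite-dimensional `A`-module that is Schur
(`End_A(M) ≅ K`) and homogeneous (`M ≅ τM`, where `T` stands for the
Auslander–Reiten translate `τM`).  Define the weight `θ^M` by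
`θ^M(dim X) = dim_K Hom_A(M, X) − dim_K Hom_A(X, τM)`.  Then `M` is
`θ^M`-stable: `θ^M(dim M) = 0` and `θ^M(dim M') < 0` for every proper nonzero
submodule `M' ⊊ M`. -/
theorem stmt4 (K A M T : Type*) [Field K] [IsAlgClosed K] [Ring A] [Algebra K A]
    [FiniteDimensional K A]
    [AddCommGroup M] [Module K M] [Module A M] [IsScalarTower K A M]
    [SMulCommClass A K M] [FiniteDimensional K M]
    [AddCommGroup T] [Module K T] [Module A T] [IsScalarTower K A T]
    [SMulCommClass A K T] [FiniteDimensional K T]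
    (hSchur : Function.Bijective (algebraMap K (Module.End A M)))
    (hhomogeneous : Nonempty (M ≃ₗ[A] T)) :
    ((Module.finrank K (M →ₗ[A] M) : ℤ) - Module.finrank K (M →ₗ[A] T) = 0) ∧
    (∀ M' : Submodule A M, M' ≠ ⊥ → M' ≠ ⊤ →
      (Module.finrank K (M →ₗ[A] M') : ℤ) - Module.finrank K (M' →ₗ[A] T) < 0) :=
  stmt4_general K A M T hSchur hhomogeneous
end

section
/- For the algebra Λ = K⟨a,b⟩ given by the quiver with arrow a : 1 → 2 and loop b at 2 with relations bⁿ = b²a = 0, the representation M with dimension vector (1, m) for 2 ≤ m ≤ n, where B acts on K^m ≅ K[x]/(x^m) as multiplication by x and A : K → K[x]/(x^m) sends 1 to x^{m−1}, is an indecomposable Λ-module; in fact End_Λ(M) is local. -/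
open Polynomial

/-- The vector space `V₂ = K[x]/(x^m)`. -/
def Vm (K : Type*) [Field K] (m : ℕ) : Type _ :=
  Polynomial K ⧸ Ideal.span {(X : Polynomial K) ^ m}

noncomputable instance (K : Type*) [Field K] (m : ℕ) : CommRing (Vm K m) :=
  inferInstanceAs (CommRing (Polynomial K ⧸ Ideal.span {(X : Polynomial K) ^ m}))

noncomputable instance (K : Type*) [Field K] (m : ℕ) : Algebra K (Vm K m) :=
  inferInstanceAs (Algebra K (Polynomial K ⧸ Ideal.span {(X : Polynomial K) ^ m}))

/-- The class of `x` in `K[x]/(x^m)`. -/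
noncomputable def xVm (K : Type*) [Field K] (m : ℕ) : Vm K m :=
  Ideal.Quotient.mk (Ideal.span {(X : Polynomial K) ^ m}) X

/-- The action of the loop `b`: multiplication by `x` on `K[x]/(x^m)`. -/
noncomputable def Bmap (K : Type*) [Field K] (m : ℕ) : Vm K m →ₗ[K] Vm K m :=
  LinearMap.mulLeft K (xVm K m)

/-- The action of the arrow `a`: the map `K → K[x]/(x^m)`, `1 ↦ x^{m-1}`. -/
noncomputable def Amap (K : Type*) [Field K] (m : ℕ) : K →ₗ[K] Vm K m :=
  LinearMap.toSpanSingleton K (Vm K m) (xVm K m ^ (m - 1))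

/-! Since `x` generates `K[x]/(x^m)`, an endomorphism `(φ₁, φ₂)` commuting with `B` is
multiplication by `c = φ₂ 1` on `V₂`, and `φ₁` is multiplication by some `r ∈ K`. Compatibility
with `A` says `(c - r) x^{m-1} = 0`; since `x^{m-1} ≠ 0`, `c - r` is not a unit, so `r` is the
constant term of `c`. Thus `End(M) ≅ K[x]/(x^m)`, which is local because the kernel of the
constant-term map is nilpotent: an idempotent `c` is `0` or `1`, and `c` or `1 - c` is a unit. -/

section AlgHomToField

variable {K A : Type*} [Field K] [CommRing A] [Algebra K A]

theorem AlgHom.isUnit_iff_ne_zero_of_isNilpotent_ker {ε : A →ₐ[K] K}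
    (hε : ∀ a, ε a = 0 → IsNilpotent a) {a : A} : IsUnit a ↔ ε a ≠ 0 := by
  refine ⟨fun ha ↦ (ha.map ε).ne_zero, fun ha ↦ ?_⟩
  have hnil : IsNilpotent (a - algebraMap K A (ε a)) := hε _ (by simp)
  simpa using hnil.isUnit_add_left_of_commute
    ((isUnit_iff_ne_zero.mpr ha).map (algebraMap K A)) (Commute.all _ _)

theorem IsLocalRing.of_isNilpotent_ker_algHom (ε : A →ₐ[K] K)
    (hε : ∀ a, ε a = 0 → IsNilpotent a) : IsLocalRing A :=
  have := ε.toRingHom.domain_nontrivial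
  .of_isUnit_or_isUnit_one_sub_self fun a ↦ by
    simp only [AlgHom.isUnit_iff_ne_zero_of_isNilpotent_ker hε, map_sub, map_one]
    by_cases h : ε a = 0 <;> simp [h]

end AlgHomToField

theorem IsIdempotentElem.eq_zero_or_one_of_isLocalRing {R : Type*} [CommRing R] [IsLocalRing R]
    {e : R} (he : IsIdempotentElem e) : e = 0 ∨ e = 1 := by
  rcases IsLocalRing.isUnit_or_isUnit_one_sub_self e with h | h
  · exact .inr ((iff_eq_one_of_isUnit h).mp he)
  · exact .inl (sub_eq_self.mp ((iff_eq_one_of_isUnit h).mp he.one_sub))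

namespace LinearMap

variable {K A : Type*} [CommSemiring K]

theorem eq_mulLeft_of_comp_mulLeft_eq [CommSemiring A] [Algebra K A] {x : A}
    (hx : Algebra.adjoin K {x} = ⊤) {f : A →ₗ[K] A} (hf : f ∘ₗ mulLeft K x = mulLeft K x ∘ₗ f) :
    f = mulLeft K (f 1) := by
  suffices h : ∀ a b, f (a * b) = a * f b by
    ext a; simpa [mul_comm] using h a 1
  intro a
  induction (hx ▸ Algebra.mem_top : a ∈ Algebra.adjoin K {x}) using Algebra.adjoin_induction with
  | mem y hy => rw [Set.mem_singleton_iff.mp hy]; exact fun b ↦ congr($hf b)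
  | algebraMap r => simp [Algebra.algebraMap_eq_smul_one]
  | add y z _ _ hy hz => simp [add_mul, hy, hz]
  | mul y z _ _ hy hz => simp [mul_assoc, hy, hz]

theorem id_sub_mulLeft [Ring A] [Algebra K A] (a : A) : id - mulLeft K a = mulLeft K (1 - a) := by
  ext; simp [sub_mul]

end LinearMap

namespace Vm

variable {K : Type*} [Field K] {m : ℕ}

variable (K m) in
noncomputable def mk : K[X] →ₐ[K] Vm K m :=
  Ideal.Quotient.mkₐ K _

theorem mk_surjective : Function.Surjective (mk K m) :=
  Ideal.Quotient.mkₐ_surjective K _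

theorem mk_eq_zero_iff {p : K[X]} : mk K m p = 0 ↔ X ^ m ∣ p :=
  Ideal.Quotient.eq_zero_iff_mem.trans Ideal.mem_span_singleton

theorem mk_X : mk K m X = xVm K m := rfl

-- `Vm K m` is definitionally `AdjoinRoot (X ^ m)`, with `xVm K m` its root.
theorem adjoin_xVm_eq_top : Algebra.adjoin K {xVm K m} = ⊤ :=
  AdjoinRoot.adjoinRoot_eq_top

theorem eq_mulLeft_of_comp_Bmap_eq {φ : Vm K m →ₗ[K] Vm K m}
    (hB : φ ∘ₗ Bmap K m = Bmap K m ∘ₗ φ) : φ = LinearMap.mulLeft K (φ 1) :=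
  LinearMap.eq_mulLeft_of_comp_mulLeft_eq adjoin_xVm_eq_top hB

variable (K m) in
noncomputable def constCoeff [NeZero m] : Vm K m →ₐ[K] K :=
  Ideal.Quotient.liftₐ _ (aeval 0) fun p hp ↦ by
    obtain ⟨q, rfl⟩ := Ideal.mem_span_singleton.mp hp
    simp [NeZero.ne m]

variable [NeZero m]

@[simp]
theorem constCoeff_mk (p : K[X]) : constCoeff K m (mk K m p) = p.coeff 0 := by
  rw [coeff_zero_eq_aeval_zero]
  rfl

theorem isNilpotent_of_constCoeff_eq_zero {a : Vm K m} (ha : constCoeff K m a = 0) :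
    IsNilpotent a := by
  obtain ⟨p, rfl⟩ := mk_surjective a
  obtain ⟨q, rfl⟩ := X_dvd_iff.mpr (by simpa using ha)
  exact ⟨m, by rw [← map_pow, mk_eq_zero_iff, mul_pow]; exact dvd_mul_right _ _⟩

theorem isUnit_iff_constCoeff_ne_zero {a : Vm K m} : IsUnit a ↔ constCoeff K m a ≠ 0 :=
  AlgHom.isUnit_iff_ne_zero_of_isNilpotent_ker fun _ ↦ isNilpotent_of_constCoeff_eq_zero

instance : IsLocalRing (Vm K m) :=
  .of_isNilpotent_ker_algHom (constCoeff K m) fun _ ↦ isNilpotent_of_constCoeff_eq_zero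

theorem xVm_pow_pred_ne_zero : xVm K m ^ (m - 1) ≠ 0 := by
  rw [← mk_X, ← map_pow, Ne, mk_eq_zero_iff, pow_dvd_pow_iff X_ne_zero not_isUnit_X]
  have := NeZero.ne m
  omega

theorem constCoeff_eq_zero_of_mul_xVm_pow_pred_eq_zero {a : Vm K m}
    (ha : a * xVm K m ^ (m - 1) = 0) : constCoeff K m a = 0 := by
  by_contra h
  exact xVm_pow_pred_ne_zero ((isUnit_iff_constCoeff_ne_zero.mpr h).mul_right_eq_zero.mp ha)

theorem constCoeff_eq_of_mulLeft_comp_Amap_eq {r : K} {c : Vm K m}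
    (hA : LinearMap.mulLeft K c ∘ₗ Amap K m = Amap K m ∘ₗ LinearMap.mulLeft K r) :
    constCoeff K m c = r := by
  have hAc : (c - algebraMap K _ r) * xVm K m ^ (m - 1) = 0 := by
    simpa [Amap, sub_mul, Algebra.smul_def, sub_eq_zero] using congr($hA 1)
  simpa [sub_eq_zero] using constCoeff_eq_zero_of_mul_xVm_pow_pred_eq_zero hAc

end Vm

theorem stmt10_general (K : Type*) [Field K] (m : ℕ) (hm : 2 ≤ m) :
    ∀ (φ₁ : K →ₗ[K] K) (φ₂ : Vm K m →ₗ[K] Vm K m),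
      φ₂ ∘ₗ Amap K m = Amap K m ∘ₗ φ₁ →
      φ₂ ∘ₗ Bmap K m = Bmap K m ∘ₗ φ₂ →
      ((φ₁ ∘ₗ φ₁ = φ₁ → φ₂ ∘ₗ φ₂ = φ₂ →
          (φ₁ = 0 ∧ φ₂ = 0) ∨ (φ₁ = LinearMap.id ∧ φ₂ = LinearMap.id)) ∧
        ((Function.Bijective φ₁ ∧ Function.Bijective φ₂) ∨
          (Function.Bijective ((LinearMap.id : K →ₗ[K] K) - φ₁) ∧
            Function.Bijective ((LinearMap.id : Vm K m →ₗ[K] Vm K m) - φ₂)))) := by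
  intro φ₁ φ₂ hA hB
  have : NeZero m := ⟨by omega⟩
  obtain ⟨r, rfl⟩ : ∃ r, φ₁ = LinearMap.mulLeft K r := ⟨φ₁ 1, LinearMap.ext_ring (by simp)⟩
  obtain ⟨c, rfl⟩ : ∃ c, φ₂ = LinearMap.mulLeft K c := ⟨φ₂ 1, Vm.eq_mulLeft_of_comp_Bmap_eq hB⟩
  obtain rfl := Vm.constCoeff_eq_of_mulLeft_comp_Amap_eq hA
  refine ⟨fun _ hc ↦ ?_, ?_⟩
  · have hc : IsIdempotentElem c := by simpa [IsIdempotentElem] using congr($hc 1)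
    rcases hc.eq_zero_or_one_of_isLocalRing with rfl | rfl <;> simp
  · simp only [LinearMap.id_sub_mulLeft, ← map_one (Vm.constCoeff K m), ← map_sub]
    have hbij {d : Vm K m} (hd : IsUnit d) : Function.Bijective (LinearMap.mulLeft K
        (Vm.constCoeff K m d)) ∧ Function.Bijective (LinearMap.mulLeft K d) :=
      ⟨IsUnit.isUnit_iff_mulLeft_bijective.mp (hd.map _), IsUnit.isUnit_iff_mulLeft_bijective.mp hd⟩
    exact (IsLocalRing.isUnit_or_isUnit_one_sub_self c).imp hbij hbij

/-- For the algebra `Λ` (quiver `1 →a 2` with loop `b` at `2`,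
relations `bⁿ = b²a = 0`, `n ≥ 2`), the representation `M` of dimension vector
`(1, m)` for `2 ≤ m ≤ n` with `V₁ = K`, `V₂ = K[x]/(x^m)`, `B = `
multiplication by `x` and `A(1) = x^{m-1}` is indecomposable; in fact its
endomorphism ring is local.  Endomorphisms are pairs `(φ₁, φ₂)` commuting with
`A` and `B`; indecomposability says every idempotent endomorphism is `0` or
`1`, and locality says every endomorphism is invertible or has invertible
complement `1 - φ`. -/
theorem stmt10 (K : Type*) [Field K] (n m : ℕ) (hn : 2 ≤ n) (hm : 2 ≤ m)
    (hmn : m ≤ n) :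
    ∀ (φ₁ : K →ₗ[K] K) (φ₂ : Vm K m →ₗ[K] Vm K m),
      φ₂ ∘ₗ Amap K m = Amap K m ∘ₗ φ₁ →
      φ₂ ∘ₗ Bmap K m = Bmap K m ∘ₗ φ₂ →
      ((φ₁ ∘ₗ φ₁ = φ₁ → φ₂ ∘ₗ φ₂ = φ₂ →
          (φ₁ = 0 ∧ φ₂ = 0) ∨ (φ₁ = LinearMap.id ∧ φ₂ = LinearMap.id)) ∧
        ((Function.Bijective φ₁ ∧ Function.Bijective φ₂) ∨
          (Function.Bijective ((LinearMap.id : K →ₗ[K] K) - φ₁) ∧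
            Function.Bijective ((LinearMap.id : Vm K m →ₗ[K] Vm K m) - φ₂)))) :=
  stmt10_general K m hm
end

section
/- Let A be a finite-dimensional algebra, e and f primitive idempotents of A with eAe ≅ K and fAf ≅ K (e.g. A triangular with no loops), and suppose v, w ∈ fAe are elements such that the quotient family V_λ = Ae/⟨v − λw⟩ (λ ∈ K) consists of well-defined A-modules (after modding out suitable radical terms as in Bongartz's construction). Then each V_λ satisfies: the restriction map End_A(V_λ) → Hom_A(Ae, V_λ) = eV_λ is injective, and if eV_λ = eAe ≅ K then V_λ is a Schur module. -/
/-- The subspace `eV = {x ∈ V | e • x = x}` (naturally `Hom_A(Ae, V)`), for an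
idempotent `e ∈ A` and an `A`-module `V`. -/
def idemSubspace (K : Type*) [Field K] (A : Type*) [Ring A] [Algebra K A]
    (V : Type*) [AddCommGroup V] [Module K V] [Module A V]
    [SMulCommClass A K V] (e : A) : Submodule K V where
  carrier := {x : V | e • x = x}
  add_mem' := by intro x y hx hy; show e • (x + y) = x + y; rw [smul_add, hx, hy]
  zero_mem' := by show e • (0 : V) = 0; rw [smul_zero]
  smul_mem' := by
    intro c x hx
    show e • c • x = c • x
    rw [smul_comm, hx]

/-
The evaluation map `φ ↦ φ v₀` is `Hom_A(Ae, -)` applied to the surjection `Ae ↠ V`, `a e ↦ a v₀`;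
it is injective because `v₀` generates `V`, and it lands in `eV` because `φ` commutes with `e`.
When `eV` is one-dimensional, `End_A(V)` is a nonzero `K`-algebra of dimension at most one,
hence equal to `K`.
-/

open Module

theorem LinearMap.apply_injective_of_forall_exists_smul_eq {A V W : Type*} [Semiring A]
    [AddCommMonoid V] [AddCommMonoid W] [Module A V] [Module A W] {v₀ : V}
    (hgen : ∀ x : V, ∃ a : A, a • v₀ = x) :
    Function.Injective (fun f : V →ₗ[A] W => f v₀) := by
  intro f g hfg
  ext x
  obtain ⟨a, rfl⟩ := hgen x
  simp only [map_smul, hfg]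

theorem Algebra.bijective_algebraMap_of_injective_of_finrank_eq_one {K R W : Type*} [Field K]
    [Ring R] [Nontrivial R] [Algebra K R] [AddCommGroup W] [Module K W]
    (L : R →ₗ[K] W) (hL : Function.Injective L) (hW : finrank K W = 1) :
    Function.Bijective (algebraMap K R) := by
  have : Module.Finite K W := Module.finite_of_finrank_eq_succ hW
  have : Module.Finite K R := Module.Finite.of_injective L hL
  have hle : finrank K R ≤ 1 := hW ▸ LinearMap.finrank_le_finrank_of_injective hL
  exact Algebra.finrank_eq_one_iff_bijective_algebraMap.mp (le_antisymm hle finrank_pos)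

section idemSubspace

variable {K A V : Type*} [Field K] [Ring A] [Algebra K A] [AddCommGroup V] [Module K V]
  [Module A V] [SMulCommClass A K V] {e : A}

theorem LinearMap.apply_mem_idemSubspace (φ : Module.End A V) {x : V}
    (hx : x ∈ idemSubspace K A V e) : φ x ∈ idemSubspace K A V e :=
  show e • φ x = φ x by rw [← map_smul, hx]

def evalIdemSubspace (v₀ : V) (hv₀ : v₀ ∈ idemSubspace K A V e) :
    Module.End A V →ₗ[K] idemSubspace K A V e where
  toFun φ := ⟨φ v₀, φ.apply_mem_idemSubspace hv₀⟩
  map_add' _ _ := rfl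
  map_smul' _ _ := rfl

theorem evalIdemSubspace_injective {v₀ : V} (hv₀ : v₀ ∈ idemSubspace K A V e)
    (hgen : ∀ x : V, ∃ a : A, a • v₀ = x) : Function.Injective (evalIdemSubspace v₀ hv₀) :=
  fun _ _ h => LinearMap.apply_injective_of_forall_exists_smul_eq hgen (congrArg Subtype.val h)

end idemSubspace

theorem stmt15_general (K A V : Type*) [Field K]
    [Ring A] [Algebra K A]
    [AddCommGroup V] [Module K V] [Module A V] [IsScalarTower K A V]
    [SMulCommClass A K V]
    (e : A)
    (v₀ : V) (hv₀ : e • v₀ = v₀)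
    (hgen : ∀ x : V, ∃ a : A, a • v₀ = x) :
    Function.Injective (fun φ : Module.End A V => φ v₀) ∧
    (∀ φ : Module.End A V, φ v₀ ∈ idemSubspace K A V e) ∧
    (Module.finrank K (idemSubspace K A V e) = 1 →
      Function.Bijective (algebraMap K (Module.End A V))) := by
  have hv₀ : v₀ ∈ idemSubspace K A V e := hv₀
  refine ⟨LinearMap.apply_injective_of_forall_exists_smul_eq hgen,
    fun φ => φ.apply_mem_idemSubspace hv₀, fun hdim => ?_⟩
  have : Nontrivial (idemSubspace K A V e) := Module.nontrivial_of_finrank_eq_succ hdim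
  have : Nontrivial V := (idemSubspace K A V e).subtype_injective.nontrivial
  exact Algebra.bijective_algebraMap_of_injective_of_finrank_eq_one _
    (evalIdemSubspace_injective hv₀ hgen) hdim

/-- Let `A` be a finite-dimensional algebra, `e` a (primitive)
idempotent, and `V` an `A`-module which is a quotient of the projective module
`Ae` (as in Bongartz's family `V_λ = Ae/⟨v − λw⟩`): `V` is generated by an
element `v₀` with `e • v₀ = v₀` (the image of `e`).  Then the natural map
`End_A(V) → Hom_A(Ae, V) = eV`, `φ ↦ φ(v₀)`, is injective and indeed takes
values in `eV`; and if `eV = eAe ≅ K` is one-dimensional, then `V` is a Schur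
module. -/
theorem stmt15 (K A V : Type*) [Field K] [IsAlgClosed K]
    [Ring A] [Algebra K A] [FiniteDimensional K A]
    [AddCommGroup V] [Module K V] [Module A V] [IsScalarTower K A V]
    [SMulCommClass A K V] [FiniteDimensional K V]
    (e : A) (he : e * e = e)
    (v₀ : V) (hv₀ : e • v₀ = v₀)
    (hgen : ∀ x : V, ∃ a : A, a • v₀ = x) :
    Function.Injective (fun φ : Module.End A V => φ v₀) ∧
    (∀ φ : Module.End A V, φ v₀ ∈ idemSubspace K A V e) ∧
    (Module.finrank K (idemSubspace K A V e) = 1 →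
      Function.Bijective (algebraMap K (Module.End A V))) :=
  stmt15_general K A V e v₀ hv₀ hgen
end
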